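/- arXiv:2506.10354 — 2 statements merged into one kernel-verified Lean document; each statement's English description precedes it below -/
import Mathlib

section
/- Fix p ∈ (0, 1). Then the worst-case risk of the projection onto the unit ℓp ball satisfies R^MLE(B_p^d, σ) ≤ 4 · min{ σ²d, 1, ε_p(σ)² }, where ε_p(σ)² = inf_{ε > 0} { ε² + (σ²/ε²) · ‖Φ_{p,ε}‖_{L²}² } and Φ_{p,ε}(ξ) = sup{ ⟨x, ξ⟩ : x ∈ ℝ^d, ‖x‖_p^p ≤ 2, ‖x‖₂ ≤ ε } for ξ ∼ N(0, I_d). -/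
open MeasureTheory ProbabilityTheory Real Filter Pointwise
open scoped ENNReal NNReal

noncomputable section

/-- The standard Gaussian measure `N(0, I_d)` on `ℝ^d`. -/
def stdGaussian (d : ℕ) : Measure (Fin d → ℝ) :=
  Measure.pi fun _ => gaussianReal 0 1

/-- Squared Euclidean distance on `ℝ^d`. -/
def sqDist {d : ℕ} (x y : Fin d → ℝ) : ℝ := ∑ i, (x i - y i) ^ 2

/-- The ℓp (quasi)norm, for `0 < p < ∞`. -/
def pNorm {d : ℕ} (p : ℝ) (x : Fin d → ℝ) : ℝ := (∑ i, |x i| ^ p) ^ (1 / p)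

/-- The unit ℓp ball in `ℝ^d`. -/
def lpBall (d : ℕ) (p : ℝ) : Set (Fin d → ℝ) := {x | pNorm p x ≤ 1}

/-- `proj` is a Euclidean projection onto `Θ`: it takes values in `Θ` and
minimizes the Euclidean distance to `Θ`. -/
def IsProjOn {d : ℕ} (Θ : Set (Fin d → ℝ)) (proj : (Fin d → ℝ) → Fin d → ℝ) : Prop :=
  ∀ y, proj y ∈ Θ ∧ ∀ ϑ ∈ Θ, sqDist y (proj y) ≤ sqDist y ϑ

/-- The risk `E‖θhat(θ + σξ) − θ‖₂²` of an estimator at `θ`. -/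
def risk {d : ℕ} (θhat : (Fin d → ℝ) → Fin d → ℝ) (σ : ℝ) (θ : Fin d → ℝ) : ℝ≥0∞ :=
  ∫⁻ ξ, ENNReal.ofReal (sqDist (θhat (θ + σ • ξ)) θ) ∂(stdGaussian d)

/-- Worst-case (supremum) risk of an estimator over `Θ`. -/
def supRisk {d : ℕ} (Θ : Set (Fin d → ℝ)) (θhat : (Fin d → ℝ) → Fin d → ℝ) (σ : ℝ) : ℝ≥0∞ :=
  ⨆ θ ∈ Θ, risk θhat σ θ

/-- Minimax risk over `Θ`: infimum over measurable estimators of the worst-case risk. -/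
def minimax {d : ℕ} (Θ : Set (Fin d → ℝ)) (σ : ℝ) : ℝ≥0∞ :=
  ⨅ θhat ∈ {f : (Fin d → ℝ) → Fin d → ℝ | Measurable f}, supRisk Θ θhat σ

/-- The random supremum `Φ_{p,ε}(ξ) = sup{⟨x,ξ⟩ : ‖x‖_p^p ≤ 2, ‖x‖₂ ≤ ε}`. -/
def Phi {d : ℕ} (p ε : ℝ) (ξ : Fin d → ℝ) : ℝ :=
  sSup {v | ∃ x : Fin d → ℝ,
    (∑ i, |x i| ^ p) ≤ 2 ∧ (∑ i, x i ^ 2) ≤ ε ^ 2 ∧ v = ∑ i, x i * ξ i}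

/-- The fixed-point quantity `ε_p(σ)² = inf_{ε>0} {ε² + (σ²/ε²)·‖Φ_{p,ε}‖_{L²}²}`. -/
def epsPSq (d : ℕ) (p σ : ℝ) : ℝ :=
  ⨅ ε : {e : ℝ // 0 < e},
    (ε : ℝ) ^ 2 + σ ^ 2 / (ε : ℝ) ^ 2 * ∫ ξ, Phi p (ε : ℝ) ξ ^ 2 ∂(stdGaussian d)

/-! If `θ̂` is the projection of `y = θ + σξ` onto a set containing `θ`, the basic inequality
of least squares gives `‖θ̂ - θ‖² ≤ 2σ⟨ξ, θ̂ - θ⟩`. Cauchy–Schwarz turns this into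
`‖θ̂ - θ‖² ≤ 4σ²‖ξ‖²`, and `B_p ⊆ B_2` gives `‖θ̂ - θ‖² ≤ 4`. For the third bound, `v = θ̂ - θ`
has `‖v‖_p^p ≤ 2` by the `p`-triangle inequality (`p ≤ 1`), so if `‖v‖₂ > ε` the vector
`ε v / ‖v‖₂` is admissible in `Φ_{p,ε}(ξ)`, whence `ε‖v‖₂ ≤ 2σΦ_{p,ε}(ξ)`. Thus
`‖v‖₂² ≤ ε² + 4σ²Φ_{p,ε}(ξ)²/ε²` for every `ε > 0`; take expectations, then the infimum. -/

instance (d : ℕ) : IsProbabilityMeasure (stdGaussian d) := by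
  unfold _root_.stdGaussian; infer_instance

section Gaussian

lemma integrable_sq_gaussianReal (μ : ℝ) (v : ℝ≥0) :
    Integrable (fun x : ℝ => x ^ 2) (gaussianReal μ v) :=
  (memLp_id_gaussianReal 2).integrable_sq

lemma integral_sq_gaussianReal : ∫ x, x ^ 2 ∂(gaussianReal 0 1) = 1 := by
  have h := variance_id_gaussianReal (μ := 0) (v := 1)
  rw [variance_eq_integral measurable_id.aemeasurable] at h
  simpa [integral_id_gaussianReal] using h

variable {d : ℕ}

lemma measurePreserving_eval_stdGaussian (i : Fin d) :
    MeasurePreserving (fun ξ : Fin d → ℝ => ξ i) (stdGaussian d) (gaussianReal 0 1) :=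
  measurePreserving_eval _ i

lemma integrable_eval_sq_stdGaussian (i : Fin d) :
    Integrable (fun ξ : Fin d → ℝ => ξ i ^ 2) (stdGaussian d) :=
  (measurePreserving_eval_stdGaussian i).integrable_comp_of_integrable
    (integrable_sq_gaussianReal 0 1)

lemma integral_eval_sq_stdGaussian (i : Fin d) :
    ∫ ξ, ξ i ^ 2 ∂(stdGaussian d) = 1 := by
  rw [← integral_sq_gaussianReal, ← (measurePreserving_eval_stdGaussian i).map_eq,
    integral_map (measurable_pi_apply i).aemeasurable (by fun_prop)]

lemma integrable_sum_sq_stdGaussian :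
    Integrable (fun ξ : Fin d → ℝ => ∑ i, ξ i ^ 2) (stdGaussian d) :=
  integrable_finsetSum _ fun i _ => integrable_eval_sq_stdGaussian i

lemma integral_sum_sq_stdGaussian : ∫ ξ, ∑ i, ξ i ^ 2 ∂(stdGaussian d) = d := by
  rw [integral_finsetSum _ fun i _ => integrable_eval_sq_stdGaussian i]
  simp [integral_eval_sq_stdGaussian]

end Gaussian

section Phi

variable {d : ℕ} {p ε : ℝ}

lemma sum_mul_le_mul_sqrt_of_sum_sq_le (hε : 0 ≤ ε) {x ξ : Fin d → ℝ}
    (hx : ∑ i, x i ^ 2 ≤ ε ^ 2) : ∑ i, x i * ξ i ≤ ε * √(∑ i, ξ i ^ 2) :=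
  (Real.sum_mul_le_sqrt_mul_sqrt _ x ξ).trans <| mul_le_mul_of_nonneg_right
    ((Real.sqrt_le_sqrt hx).trans_eq (Real.sqrt_sq hε)) (Real.sqrt_nonneg _)

lemma le_Phi (hε : 0 ≤ ε) {x : Fin d → ℝ} (hxp : ∑ i, |x i| ^ p ≤ 2)
    (hx2 : ∑ i, x i ^ 2 ≤ ε ^ 2) (ξ : Fin d → ℝ) : ∑ i, x i * ξ i ≤ Phi p ε ξ :=
  le_csSup ⟨ε * √(∑ i, ξ i ^ 2), by
    rintro _ ⟨y, -, hy2, rfl⟩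
    exact sum_mul_le_mul_sqrt_of_sum_sq_le hε hy2⟩ ⟨x, hxp, hx2, rfl⟩

lemma Phi_le (hp : p ≠ 0) {ξ : Fin d → ℝ} {b : ℝ}
    (h : ∀ x : Fin d → ℝ, ∑ i, |x i| ^ p ≤ 2 → ∑ i, x i ^ 2 ≤ ε ^ 2 → ∑ i, x i * ξ i ≤ b) :
    Phi p ε ξ ≤ b :=
  csSup_le ⟨0, 0, by simp [Real.zero_rpow hp], by simp [sq_nonneg], by simp⟩ <| by
    rintro _ ⟨x, hxp, hx2, rfl⟩
    exact h x hxp hx2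

lemma Phi_nonneg (hp : p ≠ 0) (hε : 0 ≤ ε) (ξ : Fin d → ℝ) : 0 ≤ Phi p ε ξ := by
  simpa using le_Phi (x := 0) hε (by simp [Real.zero_rpow hp]) (by simp [sq_nonneg]) ξ

lemma Phi_le_mul_sqrt (hp : p ≠ 0) (hε : 0 ≤ ε) (ξ : Fin d → ℝ) :
    Phi p ε ξ ≤ ε * √(∑ i, ξ i ^ 2) :=
  Phi_le hp fun _ _ hx2 => sum_mul_le_mul_sqrt_of_sum_sq_le hε hx2

lemma Phi_le_add (hp : p ≠ 0) (hε : 0 ≤ ε) (ξ ξ' : Fin d → ℝ) :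
    Phi p ε ξ ≤ Phi p ε ξ' + ε * √(∑ i, (ξ i - ξ' i) ^ 2) :=
  Phi_le hp fun x hxp hx2 => calc
    ∑ i, x i * ξ i = ∑ i, x i * ξ' i + ∑ i, x i * (ξ i - ξ' i) := by
      rw [← Finset.sum_add_distrib]; ring_nf
    _ ≤ _ := add_le_add (le_Phi hε hxp hx2 ξ') (sum_mul_le_mul_sqrt_of_sum_sq_le hε hx2)

lemma sqrt_sum_sq_sub_le (ξ ξ' : Fin d → ℝ) : √(∑ i, (ξ i - ξ' i) ^ 2) ≤ √d * dist ξ ξ' := by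
  have h : ∑ i, (ξ i - ξ' i) ^ 2 ≤ ∑ _i : Fin d, dist ξ ξ' ^ 2 :=
    Finset.sum_le_sum fun i _ => by
      rw [← sq_abs, ← Real.dist_eq]
      exact pow_le_pow_left₀ dist_nonneg (dist_le_pi_dist ξ ξ' i) 2
  calc √(∑ i, (ξ i - ξ' i) ^ 2) ≤ √(d * dist ξ ξ' ^ 2) := by simpa using Real.sqrt_le_sqrt h
    _ = √d * dist ξ ξ' := by rw [Real.sqrt_mul d.cast_nonneg, Real.sqrt_sq dist_nonneg]

lemma lipschitzWith_Phi (hp : p ≠ 0) (hε : 0 ≤ ε) :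
    LipschitzWith (Real.toNNReal (ε * √d)) (Phi (d := d) p ε) :=
  LipschitzWith.of_le_add_mul' _ fun ξ ξ' => (Phi_le_add hp hε ξ ξ').trans <| by
    rw [mul_assoc]
    gcongr
    exact sqrt_sum_sq_sub_le ξ ξ'

lemma integrable_Phi_sq (hp : p ≠ 0) (hε : 0 ≤ ε) :
    Integrable (fun ξ => Phi p ε ξ ^ 2) (stdGaussian d) := by
  refine (integrable_sum_sq_stdGaussian.const_mul (ε ^ 2)).mono'
    ((lipschitzWith_Phi hp hε).continuous.pow 2).aestronglyMeasurable (ae_of_all _ fun ξ => ?_)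
  rw [norm_pow, Real.norm_eq_abs, sq_abs,
    ← Real.sq_sqrt (Finset.sum_nonneg fun i _ => sq_nonneg (ξ i)), ← mul_pow]
  exact pow_le_pow_left₀ (Phi_nonneg hp hε ξ) (Phi_le_mul_sqrt hp hε ξ) 2

lemma mul_sum_mul_le_sqrt_mul_Phi (hp : 0 ≤ p) (hε : 0 < ε) {v : Fin d → ℝ}
    (hvp : ∑ i, |v i| ^ p ≤ 2) (hεv : ε ^ 2 ≤ ∑ i, v i ^ 2) (ξ : Fin d → ℝ) :
    ε * ∑ i, v i * ξ i ≤ √(∑ i, v i ^ 2) * Phi p ε ξ := by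
  set r := √(∑ i, v i ^ 2)
  have hεr : ε ≤ r := Real.le_sqrt_of_sq_le hεv
  have hr : 0 < r := hε.trans_le hεr
  set c := ε / r
  have hc0 : 0 ≤ c := by positivity
  have hc1 : c ≤ 1 := (div_le_one hr).mpr hεr
  have hxp : ∑ i, |c * v i| ^ p ≤ 2 := by
    refine le_trans (Finset.sum_le_sum fun i _ => ?_) hvp
    rw [abs_mul, abs_of_nonneg hc0, Real.mul_rpow hc0 (abs_nonneg _)]
    exact mul_le_of_le_one_left (by positivity) (Real.rpow_le_one hc0 hc1 hp)
  have hx2 : ∑ i, (c * v i) ^ 2 ≤ ε ^ 2 := by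
    simp_rw [mul_pow, ← Finset.mul_sum]
    rw [← Real.sq_sqrt (Finset.sum_nonneg fun i _ => sq_nonneg (v i)), ← mul_pow,
      div_mul_cancel₀ _ hr.ne']
  have hle := le_Phi hε.le hxp hx2 ξ
  simp_rw [mul_assoc, ← Finset.mul_sum] at hle
  calc ε * ∑ i, v i * ξ i = r * (c * ∑ i, v i * ξ i) := by
        rw [← mul_assoc, mul_div_cancel₀ _ hr.ne']
    _ ≤ r * Phi p ε ξ := mul_le_mul_of_nonneg_left hle hr.le

end Phi

section LpBall

variable {d : ℕ} {p : ℝ}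

lemma sum_rpow_abs_le_one_of_mem_lpBall (hp : 0 < p) {x : Fin d → ℝ} (hx : x ∈ lpBall d p) :
    ∑ i, |x i| ^ p ≤ 1 := by
  have hS : 0 ≤ ∑ i, |x i| ^ p := Finset.sum_nonneg fun i _ => by positivity
  calc ∑ i, |x i| ^ p = ((∑ i, |x i| ^ p) ^ (1 / p)) ^ p := by
        rw [one_div, Real.rpow_inv_rpow hS hp.ne']
    _ ≤ 1 ^ p := Real.rpow_le_rpow (by positivity) hx hp.le
    _ = 1 := Real.one_rpow p

lemma sum_sq_le_one_of_mem_lpBall (hp : 0 < p) (hp2 : p ≤ 2) {x : Fin d → ℝ}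
    (hx : x ∈ lpBall d p) : ∑ i, x i ^ 2 ≤ 1 := by
  have hS := sum_rpow_abs_le_one_of_mem_lpBall hp hx
  refine le_trans (Finset.sum_le_sum fun i _ => ?_) hS
  have hxi : |x i| ≤ 1 := by
    by_contra! h
    have := (Real.one_lt_rpow h hp).trans_le <|
      (Finset.single_le_sum (fun j _ => by positivity) (Finset.mem_univ i)).trans hS
    exact this.false
  calc x i ^ 2 = |x i| ^ (2 : ℝ) := by rw [Real.rpow_two, sq_abs]
    _ ≤ |x i| ^ p := Real.rpow_le_rpow_of_exponent_ge' (abs_nonneg _) hxi hp.le hp2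

lemma sqDist_le_four_of_mem_lpBall (hp : 0 < p) (hp2 : p ≤ 2) {a θ : Fin d → ℝ}
    (ha : a ∈ lpBall d p) (hθ : θ ∈ lpBall d p) : sqDist a θ ≤ 4 := by
  have hsum : sqDist a θ ≤ ∑ i, (2 * a i ^ 2 + 2 * θ i ^ 2) :=
    Finset.sum_le_sum fun i _ => by nlinarith [sq_nonneg (a i + θ i)]
  rw [Finset.sum_add_distrib, ← Finset.mul_sum, ← Finset.mul_sum] at hsum
  linarith [sum_sq_le_one_of_mem_lpBall hp hp2 ha, sum_sq_le_one_of_mem_lpBall hp hp2 hθ]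

lemma sum_rpow_abs_sub_le_two_of_mem_lpBall (hp : 0 < p) (hp1 : p ≤ 1) {a θ : Fin d → ℝ}
    (ha : a ∈ lpBall d p) (hθ : θ ∈ lpBall d p) : ∑ i, |a i - θ i| ^ p ≤ 2 := by
  calc ∑ i, |a i - θ i| ^ p ≤ ∑ i, (|a i| ^ p + |θ i| ^ p) :=
        Finset.sum_le_sum fun i _ =>
          (Real.rpow_le_rpow (abs_nonneg _) (abs_sub _ _) hp.le).trans
            (Real.rpow_add_le_add_rpow (abs_nonneg _) (abs_nonneg _) hp.le hp1)
    _ = ∑ i, |a i| ^ p + ∑ i, |θ i| ^ p := Finset.sum_add_distrib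
    _ ≤ 2 := by
        linarith [sum_rpow_abs_le_one_of_mem_lpBall hp ha, sum_rpow_abs_le_one_of_mem_lpBall hp hθ]

end LpBall

section Projection

variable {d : ℕ}

lemma sqDist_nonneg (x y : Fin d → ℝ) : 0 ≤ sqDist x y :=
  Finset.sum_nonneg fun _ _ => sq_nonneg _

lemma sqDist_le_two_mul_sum_of_sqDist_le {θ a z : Fin d → ℝ}
    (h : sqDist (θ + z) a ≤ sqDist (θ + z) θ) :
    sqDist a θ ≤ 2 * ∑ i, (a i - θ i) * z i := by
  have hexp : sqDist (θ + z) a = sqDist (θ + z) θ - 2 * ∑ i, (a i - θ i) * z i + sqDist a θ := by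
    simp only [sqDist, Pi.add_apply, Finset.mul_sum, ← Finset.sum_sub_distrib,
      ← Finset.sum_add_distrib]
    exact Finset.sum_congr rfl fun i _ => by ring
  linarith

lemma sqDist_le_four_mul_of_sqDist_le {θ a z : Fin d → ℝ}
    (h : sqDist (θ + z) a ≤ sqDist (θ + z) θ) :
    sqDist a θ ≤ 4 * ∑ i, z i ^ 2 := by
  have hcs := (sqDist_le_two_mul_sum_of_sqDist_le h).trans <|
    mul_le_mul_of_nonneg_left (Real.sum_mul_le_sqrt_mul_sqrt _ (a - θ) z) zero_le_two
  have hs := Real.sq_sqrt (sqDist_nonneg a θ)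
  have hz := Real.sq_sqrt (Finset.sum_nonneg (s := Finset.univ) fun i _ => sq_nonneg (z i))
  simp only [Pi.sub_apply] at hcs
  change sqDist a θ ≤ 2 * (√(sqDist a θ) * _) at hcs
  nlinarith [Real.sqrt_nonneg (sqDist a θ), Real.sqrt_nonneg (∑ i, z i ^ 2),
    sq_nonneg (√(sqDist a θ) - 2 * √(∑ i, z i ^ 2))]

lemma sqDist_le_add_Phi_of_sqDist_le {p σ ε : ℝ} (hp : 0 < p) (hp1 : p ≤ 1) (hσ : 0 ≤ σ)
    (hε : 0 < ε) {θ a ξ : Fin d → ℝ} (hθ : θ ∈ lpBall d p) (ha : a ∈ lpBall d p)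
    (h : sqDist (θ + σ • ξ) a ≤ sqDist (θ + σ • ξ) θ) :
    sqDist a θ ≤ ε ^ 2 + 4 * σ ^ 2 / ε ^ 2 * Phi p ε ξ ^ 2 := by
  set s := sqDist a θ
  rcases le_or_gt s (ε ^ 2) with hs | hs
  · have : 0 ≤ 4 * σ ^ 2 / ε ^ 2 * Phi p ε ξ ^ 2 := by positivity
    linarith
  have hbasic := sqDist_le_two_mul_sum_of_sqDist_le h
  simp only [Pi.smul_apply, smul_eq_mul, mul_left_comm _ σ, ← Finset.mul_sum] at hbasic
  have hloc := mul_sum_mul_le_sqrt_mul_Phi hp.le hε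
    (sum_rpow_abs_sub_le_two_of_mem_lpBall hp hp1 ha hθ) hs.le ξ
  change ε * _ ≤ √s * _ at hloc
  have hr : 0 < √s := Real.sqrt_pos.mpr ((pow_pos hε 2).trans hs)
  have hsr := Real.sq_sqrt (sqDist_nonneg a θ)
  have hkey : ε * √s ≤ 2 * σ * Phi p ε ξ := by
    refine le_of_mul_le_mul_right ?_ hr
    nlinarith [mul_le_mul_of_nonneg_left hloc (by positivity : 0 ≤ 2 * σ)]
  have : ε ^ 2 * s ≤ 4 * σ ^ 2 * Phi p ε ξ ^ 2 := by
    nlinarith [pow_le_pow_left₀ (by positivity) hkey 2]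
  have : s ≤ 4 * σ ^ 2 / ε ^ 2 * Phi p ε ξ ^ 2 := by
    rw [div_mul_eq_mul_div, le_div_iff₀ (by positivity)]
    linarith
  linarith [sq_nonneg ε]

end Projection

section Risk

variable {d : ℕ}

lemma risk_le_ofReal_integral {θhat : (Fin d → ℝ) → Fin d → ℝ} {σ : ℝ} {θ : Fin d → ℝ}
    {g : (Fin d → ℝ) → ℝ} (hg : Integrable g (stdGaussian d))
    (h : ∀ ξ, sqDist (θhat (θ + σ • ξ)) θ ≤ g ξ) :
    risk θhat σ θ ≤ ENNReal.ofReal (∫ ξ, g ξ ∂(stdGaussian d)) := by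
  rw [ofReal_integral_eq_lintegral_ofReal hg
    (ae_of_all _ fun ξ => (sqDist_nonneg _ _).trans (h ξ))]
  exact lintegral_mono fun ξ => ENNReal.ofReal_le_ofReal (h ξ)

variable {proj : (Fin d → ℝ) → Fin d → ℝ} {θ : Fin d → ℝ}

lemma risk_proj_le_noise {Θ : Set (Fin d → ℝ)} (hproj : IsProjOn Θ proj) (σ : ℝ) (hθ : θ ∈ Θ) :
    risk proj σ θ ≤ ENNReal.ofReal (4 * (σ ^ 2 * d)) := by
  refine (risk_le_ofReal_integral (integrable_sum_sq_stdGaussian.const_mul (4 * σ ^ 2))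
    fun ξ => (sqDist_le_four_mul_of_sqDist_le ((hproj _).2 θ hθ)).trans_eq ?_).trans_eq ?_
  · simp [mul_pow, Finset.mul_sum, mul_assoc]
  · rw [integral_const_mul, integral_sum_sq_stdGaussian, mul_assoc]

variable {p : ℝ}

lemma risk_proj_lpBall_le_four (hp : 0 < p) (hp2 : p ≤ 2) (hproj : IsProjOn (lpBall d p) proj)
    (σ : ℝ) (hθ : θ ∈ lpBall d p) : risk proj σ θ ≤ ENNReal.ofReal 4 := by
  simpa using risk_le_ofReal_integral (integrable_const (4 : ℝ))
    fun ξ => sqDist_le_four_of_mem_lpBall hp hp2 (hproj (θ + σ • ξ)).1 hθ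

lemma risk_proj_lpBall_le_localized (hp : 0 < p) (hp1 : p ≤ 1)
    (hproj : IsProjOn (lpBall d p) proj) {σ ε : ℝ} (hσ : 0 ≤ σ) (hε : 0 < ε)
    (hθ : θ ∈ lpBall d p) :
    risk proj σ θ ≤ ENNReal.ofReal
      (4 * (ε ^ 2 + σ ^ 2 / ε ^ 2 * ∫ ξ, Phi p ε ξ ^ 2 ∂(stdGaussian d))) := by
  have hΦ := integrable_Phi_sq (d := d) hp.ne' hε.le
  refine (risk_le_ofReal_integral (g := fun ξ => ε ^ 2 + 4 * σ ^ 2 / ε ^ 2 * Phi p ε ξ ^ 2)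
    ((integrable_const _).add (hΦ.const_mul _))
    fun ξ => sqDist_le_add_Phi_of_sqDist_le hp hp1 hσ hε hθ (hproj _).1
      ((hproj _).2 θ hθ)).trans (ENNReal.ofReal_le_ofReal ?_)
  rw [integral_add (integrable_const _) (hΦ.const_mul _), integral_const_mul]
  have : 0 ≤ σ ^ 2 / ε ^ 2 * ∫ ξ, Phi p ε ξ ^ 2 ∂(stdGaussian d) :=
    mul_nonneg (by positivity) (integral_nonneg fun ξ => sq_nonneg _)
  simp only [integral_const, probReal_univ, one_smul, mul_div_assoc, mul_assoc]
  linarith [sq_nonneg ε]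

lemma risk_proj_lpBall_le_epsPSq (hp : 0 < p) (hp1 : p ≤ 1) (hproj : IsProjOn (lpBall d p) proj)
    {σ : ℝ} (hσ : 0 ≤ σ) (hθ : θ ∈ lpBall d p) :
    risk proj σ θ ≤ ENNReal.ofReal (4 * epsPSq d p σ) := by
  have : Nonempty {e : ℝ // 0 < e} := ⟨⟨1, one_pos⟩⟩
  rw [epsPSq, Real.mul_iInf_of_nonneg zero_le_four, ENNReal.ofReal_iInf]
  exact le_iInf fun ε => risk_proj_lpBall_le_localized hp hp1 hproj hσ ε.2 hθ

end Risk

theorem mle_risk_bound_weak_sparse_fixed_point_general (d : ℕ) (p : ℝ) (hp0 : 0 < p) (hp1 : p < 1)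
    (σ : ℝ) (hσ : 0 < σ)
    (proj : (Fin d → ℝ) → Fin d → ℝ) (hproj : IsProjOn (lpBall d p) proj) :
    supRisk (lpBall d p) proj σ ≤
      ENNReal.ofReal (4 * min (σ ^ 2 * d) (min 1 (epsPSq d p σ))) := by
  simp only [mul_min_of_nonneg _ _ (zero_le_four : (0 : ℝ) ≤ 4), mul_one, ENNReal.ofReal_min]
  refine iSup₂_le fun θ hθ => le_min (risk_proj_le_noise hproj σ hθ) (le_min ?_ ?_)
  · exact risk_proj_lpBall_le_four hp0 (by linarith) hproj σ hθ
  · exact risk_proj_lpBall_le_epsPSq hp0 hp1.le hproj hσ.le hθ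

/-- For `p ∈ (0,1)`, the worst-case risk of the MLE over the unit ℓp
ball satisfies `R^MLE(B_p^d, σ) ≤ 4·min{σ²d, 1, ε_p(σ)²}`. -/
theorem mle_risk_bound_weak_sparse_fixed_point (d : ℕ) (p : ℝ) (hp0 : 0 < p) (hp1 : p < 1)
    (σ : ℝ) (hσ : 0 < σ)
    (proj : (Fin d → ℝ) → Fin d → ℝ) (hproj : IsProjOn (lpBall d p) proj)
    (hmeas : Measurable proj) :
    supRisk (lpBall d p) proj σ ≤
      ENNReal.ofReal (4 * min (σ ^ 2 * d) (min 1 (epsPSq d p σ))) :=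
  mle_risk_bound_weak_sparse_fixed_point_general d p hp0 hp1 σ hσ proj hproj
end
end

section
/- There is a universal constant C > 0 such that for every p ∈ (1, 2) with q = p/(p − 1), and every σ with d^{−1/p} ≤ σ ≤ 1/√(1 + log d), the worst-case risk of the maximum likelihood estimator over the unit ℓp ball satisfies R^MLE(B_p^d, σ) ≤ C · min{ 1, σ·√q·d^{1/q} }. -/
/-!
Let `θ` lie in the ball and let `P` be the projection of `y = θ + σξ`. Since the ball is convex,
`‖P - θ‖₂² ≤ ⟪y - θ, P - θ⟫ = σ⟪ξ, P - θ⟫ ≤ σ‖ξ‖_q ‖P - θ‖_p ≤ 2σ‖ξ‖_q` by Hölder, while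
`‖P - θ‖₂ ≤ ‖P - θ‖_p ≤ 2` because `p ≤ 2`. In expectation, `E‖ξ‖_q ≤ (d E|g|^q)^{1/q}`, and the
pointwise bound `|x|^q ≤ (2q)^{q/2} e^{x²/4}` together with `E e^{g²/4} = √2` gives
`E|g|^q ≤ (2√q)^q`. Hence the risk is at most `min(4, 4σ√q d^{1/q})`.
-/

open MeasureTheory ProbabilityTheory Real Filter Pointwise
open scoped ENNReal NNReal

noncomputable section

open Topology

variable {d : ℕ}

lemma sum_rpow_le_rpow_sum {ι : Type*} (s : Finset ι) {a : ι → ℝ} (ha : ∀ i ∈ s, 0 ≤ a i)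
    {r : ℝ} (hr : 1 ≤ r) : ∑ i ∈ s, a i ^ r ≤ (∑ i ∈ s, a i) ^ r := by
  have split : ∀ x : ℝ, 0 ≤ x → x ^ r = x ^ (r - 1) * x := fun x hx => by
    rw [← Real.rpow_add_one' hx (by linarith), sub_add_cancel]
  calc ∑ i ∈ s, a i ^ r = ∑ i ∈ s, a i ^ (r - 1) * a i :=
        Finset.sum_congr rfl fun i hi => split _ (ha i hi)
    _ ≤ ∑ i ∈ s, (∑ j ∈ s, a j) ^ (r - 1) * a i := by
        gcongr with i hi
        · exact ha i hi
        · exact ha i hi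
        · exact Finset.single_le_sum ha hi
    _ = (∑ i ∈ s, a i) ^ r := by rw [← Finset.mul_sum, split _ (Finset.sum_nonneg ha)]

lemma pNorm_nonneg (p : ℝ) (x : Fin d → ℝ) : 0 ≤ pNorm p x := by
  unfold pNorm
  positivity

lemma pNorm_add_le {p : ℝ} (hp : 1 ≤ p) (x y : Fin d → ℝ) :
    pNorm p (x + y) ≤ pNorm p x + pNorm p y :=
  calc pNorm p (x + y) ≤ (∑ i, (|x i| + |y i|) ^ p) ^ (1 / p) := by
        unfold pNorm
        gcongr with i
        exact abs_add_le _ _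
    _ ≤ pNorm p x + pNorm p y :=
        Real.Lp_add_le_of_nonneg _ hp (fun i _ => abs_nonneg _) (fun i _ => abs_nonneg _)

lemma pNorm_smul {p : ℝ} (hp : 0 < p) (c : ℝ) (x : Fin d → ℝ) :
    pNorm p (c • x) = |c| * pNorm p x := by
  simp only [pNorm, Pi.smul_apply, smul_eq_mul, abs_mul,
    Real.mul_rpow (abs_nonneg _) (abs_nonneg _), ← Finset.mul_sum]
  rw [Real.mul_rpow (by positivity) (by positivity), ← Real.rpow_mul (abs_nonneg c),
    mul_one_div_cancel hp.ne', Real.rpow_one]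

lemma pNorm_neg (p : ℝ) (x : Fin d → ℝ) : pNorm p (-x) = pNorm p x := by
  simp [pNorm]

lemma convex_lpBall {p : ℝ} (hp : 1 ≤ p) : Convex ℝ (lpBall d p) := by
  intro x (hx : pNorm p x ≤ 1) y (hy : pNorm p y ≤ 1) a b ha hb hab
  calc pNorm p (a • x + b • y) ≤ pNorm p (a • x) + pNorm p (b • y) := pNorm_add_le hp _ _
    _ = a * pNorm p x + b * pNorm p y := by
        rw [pNorm_smul (by linarith), pNorm_smul (by linarith), abs_of_nonneg ha,
          abs_of_nonneg hb]
    _ ≤ a * 1 + b * 1 := by gcongr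
    _ = 1 := by rw [mul_one, mul_one, hab]

lemma pNorm_sub_le_two {p : ℝ} (hp : 1 ≤ p) {x y : Fin d → ℝ} (hx : x ∈ lpBall d p)
    (hy : y ∈ lpBall d p) : pNorm p (x - y) ≤ 2 := by
  have hx : pNorm p x ≤ 1 := hx
  have hy : pNorm p y ≤ 1 := hy
  calc pNorm p (x - y) ≤ pNorm p x + pNorm p (-y) := by
        rw [sub_eq_add_neg]
        exact pNorm_add_le hp _ _
    _ ≤ 2 := by linarith [pNorm_neg p y]

lemma sum_sq_le_pNorm_sq {p : ℝ} (hp0 : 0 < p) (hp2 : p ≤ 2) (x : Fin d → ℝ) :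
    ∑ i, x i ^ 2 ≤ pNorm p x ^ 2 := by
  have hsq : ∀ t : ℝ, 0 ≤ t → (t ^ p) ^ (2 / p) = t ^ 2 := fun t ht => by
    rw [← Real.rpow_mul ht, mul_div_cancel₀ _ hp0.ne', Real.rpow_two]
  calc ∑ i, x i ^ 2 = ∑ i, (|x i| ^ p) ^ (2 / p) := by simp only [hsq _ (abs_nonneg _), sq_abs]
    _ ≤ (∑ i, |x i| ^ p) ^ (2 / p) :=
        sum_rpow_le_rpow_sum _ (fun i _ => by positivity) ((one_le_div hp0).2 hp2)
    _ = pNorm p x ^ 2 := by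
        rw [pNorm, ← Real.rpow_natCast, ← Real.rpow_mul (by positivity)]
        ring_nf

lemma sum_mul_le_pNorm_mul_pNorm {p q : ℝ} (hpq : p.HolderConjugate q) (x y : Fin d → ℝ) :
    ∑ i, x i * y i ≤ pNorm p x * pNorm q y :=
  Real.inner_le_Lp_mul_Lq _ _ _ hpq

instance isProbabilityMeasure_stdGaussian : IsProbabilityMeasure (stdGaussian d) := by
  unfold _root_.stdGaussian
  infer_instance

lemma lintegral_comp_eval_stdGaussian (i : Fin d) {f : ℝ → ℝ≥0∞} (hf : Measurable f) :
    ∫⁻ ξ, f (ξ i) ∂stdGaussian d = ∫⁻ x, f x ∂gaussianReal 0 1 :=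
  (measurePreserving_eval (fun _ => gaussianReal 0 1) i).lintegral_comp hf

-- `e^{x²/4}` times the `N(0,1)` density is `√2` times the `N(0,2)` density.
lemma lintegral_exp_sq_div_four_gaussianReal :
    ∫⁻ x, ENNReal.ofReal (exp (x ^ 2 / 4)) ∂gaussianReal 0 1 = ENNReal.ofReal √2 := by
  have hdensity : ∀ x, gaussianPDF 0 1 x * ENNReal.ofReal (exp (x ^ 2 / 4))
      = ENNReal.ofReal √2 * gaussianPDF 0 2 x := by
    intro x
    simp only [gaussianPDF, gaussianPDFReal]
    rw [← ENNReal.ofReal_mul (by positivity), ← ENNReal.ofReal_mul (by positivity)]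
    congr 1
    have hsqrt : √(2 * π * (2 : ℝ≥0)) = √2 * √(2 * π * (1 : ℝ≥0)) := by
      rw [← Real.sqrt_mul (by norm_num)]
      push_cast
      ring_nf
    have hexp : exp (-(x - 0) ^ 2 / (2 * ((1 : ℝ≥0) : ℝ))) * exp (x ^ 2 / 4)
        = exp (-(x - 0) ^ 2 / (2 * ((2 : ℝ≥0) : ℝ))) := by
      rw [← exp_add]
      congr 1
      push_cast
      ring
    rw [hsqrt, mul_assoc, hexp]
    field_simp
  rw [gaussianReal_of_var_ne_zero 0 one_ne_zero,
    lintegral_withDensity_eq_lintegral_mul _ (measurable_gaussianPDF 0 1) (by fun_prop)]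
  simp only [Pi.mul_apply, hdensity]
  rw [lintegral_const_mul _ (measurable_gaussianPDF 0 2),
    lintegral_gaussianPDF_eq_one 0 two_ne_zero, mul_one]

lemma abs_rpow_le_mul_exp {q : ℝ} (hq : 0 < q) (x : ℝ) :
    |x| ^ q ≤ (2 * q) ^ (q / 2) * exp (x ^ 2 / 4) := by
  have hq2 : 0 < 2 * q := by positivity
  calc |x| ^ q = (2 * q * (x ^ 2 / (2 * q))) ^ (q / 2) := by
        rw [mul_div_cancel₀ _ hq2.ne', ← sq_abs, ← Real.rpow_natCast,
          ← Real.rpow_mul (abs_nonneg x)]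
        ring_nf
    _ = (2 * q) ^ (q / 2) * (x ^ 2 / (2 * q)) ^ (q / 2) := Real.mul_rpow hq2.le (by positivity)
    _ ≤ (2 * q) ^ (q / 2) * exp (x ^ 2 / (2 * q)) ^ (q / 2) := by
        gcongr
        linarith [add_one_le_exp (x ^ 2 / (2 * q))]
    _ = (2 * q) ^ (q / 2) * exp (x ^ 2 / 4) := by
        rw [← exp_mul]
        congr 2
        field_simp
        ring

lemma lintegral_abs_rpow_gaussianReal_le {q : ℝ} (hq : 1 ≤ q) :
    ∫⁻ x, ENNReal.ofReal (|x| ^ q) ∂gaussianReal 0 1 ≤ ENNReal.ofReal ((2 * √q) ^ q) := by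
  have hq0 : 0 < q := by linarith
  have hconst : (2 * q) ^ (q / 2) * √2 ≤ (2 * √q) ^ q := by
    have hpow : (2 * √q) ^ q = 2 ^ (q / 2) * (2 * q) ^ (q / 2) := by
      rw [← Real.mul_rpow (by norm_num) (by positivity), ← mul_assoc,
        show (2 : ℝ) * 2 * q = (2 * √q) ^ (2 : ℝ) by
          rw [Real.rpow_two, mul_pow, Real.sq_sqrt hq0.le]; ring,
        ← Real.rpow_mul (by positivity)]
      ring_nf
    rw [hpow, mul_comm, Real.sqrt_eq_rpow]
    gcongr
    norm_num
  calc ∫⁻ x, ENNReal.ofReal (|x| ^ q) ∂gaussianReal 0 1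
      ≤ ∫⁻ x, ENNReal.ofReal ((2 * q) ^ (q / 2)) * ENNReal.ofReal (exp (x ^ 2 / 4))
          ∂gaussianReal 0 1 := by
        refine lintegral_mono fun x => ?_
        rw [← ENNReal.ofReal_mul (by positivity)]
        exact ENNReal.ofReal_le_ofReal (abs_rpow_le_mul_exp hq0 x)
    _ = ENNReal.ofReal ((2 * q) ^ (q / 2) * √2) := by
        rw [lintegral_const_mul' _ _ ENNReal.ofReal_ne_top,
          lintegral_exp_sq_div_four_gaussianReal, ← ENNReal.ofReal_mul (by positivity)]
    _ ≤ ENNReal.ofReal ((2 * √q) ^ q) := ENNReal.ofReal_le_ofReal hconst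

lemma lintegral_pNorm_rpow_stdGaussian_le {q : ℝ} (hq : 1 ≤ q) :
    ∫⁻ ξ, ENNReal.ofReal (pNorm q ξ) ^ q ∂stdGaussian d ≤ ENNReal.ofReal (d * (2 * √q) ^ q) :=
  calc ∫⁻ ξ, ENNReal.ofReal (pNorm q ξ) ^ q ∂stdGaussian d
      = ∑ i, ∫⁻ ξ, ENNReal.ofReal (|ξ i| ^ q) ∂stdGaussian d := by
        rw [← lintegral_finsetSum _ fun i _ => by fun_prop]
        refine lintegral_congr fun ξ => ?_
        rw [ENNReal.ofReal_rpow_of_nonneg (pNorm_nonneg _ _) (by linarith), pNorm,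
          ← Real.rpow_mul (by positivity), one_div_mul_cancel (by linarith), Real.rpow_one,
          ENNReal.ofReal_sum_of_nonneg fun i _ => by positivity]
    _ ≤ ∑ _i : Fin d, ENNReal.ofReal ((2 * √q) ^ q) := Finset.sum_le_sum fun i _ =>
        (lintegral_comp_eval_stdGaussian i (f := fun x => ENNReal.ofReal (|x| ^ q))
          (by fun_prop)).trans_le (lintegral_abs_rpow_gaussianReal_le hq)
    _ = ENNReal.ofReal (d * (2 * √q) ^ q) := by
        rw [Finset.sum_const, Finset.card_univ, Fintype.card_fin, nsmul_eq_mul,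
          ENNReal.ofReal_mul (by positivity), ENNReal.ofReal_natCast]

lemma lintegral_pNorm_stdGaussian_le {q : ℝ} (hq : 1 ≤ q) :
    ∫⁻ ξ, ENNReal.ofReal (pNorm q ξ) ∂stdGaussian d ≤ ENNReal.ofReal (2 * √q * d ^ (1 / q)) := by
  have hmeas : Measurable fun ξ : Fin d → ℝ => pNorm q ξ := by
    unfold pNorm
    fun_prop
  -- Lyapunov's inequality `E X ≤ (E X^q)^{1/q}` for the probability measure `stdGaussian d`.
  have lyapunov := eLpNorm'_le_eLpNorm'_of_exponent_le zero_lt_one hq (stdGaussian d)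
    hmeas.aestronglyMeasurable
  simp only [eLpNorm', Real.enorm_eq_ofReal (pNorm_nonneg _ _), ENNReal.rpow_one, div_one]
    at lyapunov
  calc ∫⁻ ξ, ENNReal.ofReal (pNorm q ξ) ∂stdGaussian d
      ≤ (∫⁻ ξ, ENNReal.ofReal (pNorm q ξ) ^ q ∂stdGaussian d) ^ (1 / q) := lyapunov
    _ ≤ ENNReal.ofReal (d * (2 * √q) ^ q) ^ (1 / q) := by
        gcongr
        exact lintegral_pNorm_rpow_stdGaussian_le hq
    _ = ENNReal.ofReal (2 * √q * d ^ (1 / q)) := by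
        rw [ENNReal.ofReal_rpow_of_nonneg (by positivity) (by positivity),
          Real.mul_rpow (by positivity) (by positivity), ← Real.rpow_mul (by positivity),
          mul_one_div_cancel (by linarith), Real.rpow_one, mul_comm]

namespace IsProjOn

variable {Θ : Set (Fin d → ℝ)} {proj : (Fin d → ℝ) → Fin d → ℝ} {p : ℝ} {θ : Fin d → ℝ}

lemma sum_mul_nonpos (hproj : IsProjOn Θ proj) (hΘ : Convex ℝ Θ) (y : Fin d → ℝ)
    (hθ : θ ∈ Θ) : ∑ i, (y i - proj y i) * (θ i - proj y i) ≤ 0 := by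
  set P := proj y
  set D := ∑ i, (y i - P i) * (θ i - P i)
  have small_step : ∀ t ∈ Set.Ioc (0 : ℝ) 1, 2 * D ≤ t * sqDist θ P := by
    rintro t ⟨ht0, ht1⟩
    have hmin := (hproj y).2 _ (hΘ.add_smul_sub_mem (hproj y).1 hθ ⟨ht0.le, ht1⟩)
    have expand : sqDist y (P + t • (θ - P)) = sqDist y P - 2 * t * D + t ^ 2 * sqDist θ P := by
      simp only [sqDist, D, Finset.mul_sum, ← Finset.sum_sub_distrib, ← Finset.sum_add_distrib,
        Pi.add_apply, Pi.smul_apply, Pi.sub_apply, smul_eq_mul]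
      exact Finset.sum_congr rfl fun i _ => by ring
    nlinarith
  have hlim : Tendsto (fun t => t * sqDist θ P) (𝓝[>] 0) (𝓝 0) := by
    simpa using (tendsto_id.mono_left (nhdsWithin_le_nhds (a := (0 : ℝ)))).mul_const
      (sqDist θ P)
  linarith [ge_of_tendsto hlim (Filter.mem_of_superset (Ioc_mem_nhdsGT one_pos) small_step)]

lemma sqDist_le_sum_mul (hproj : IsProjOn Θ proj) (hΘ : Convex ℝ Θ) (y : Fin d → ℝ)
    (hθ : θ ∈ Θ) :
    sqDist (proj y) θ ≤ ∑ i, (y i - θ i) * (proj y i - θ i) := by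
  have hsplit : sqDist (proj y) θ = ∑ i, (y i - θ i) * (proj y i - θ i)
      + ∑ i, (y i - proj y i) * (θ i - proj y i) := by
    rw [sqDist, ← Finset.sum_add_distrib]
    exact Finset.sum_congr rfl fun i _ => by ring
  linarith [hproj.sum_mul_nonpos hΘ y hθ]

lemma sqDist_lpBall_le_four (hproj : IsProjOn (lpBall d p) proj) (hp1 : 1 ≤ p) (hp2 : p ≤ 2)
    (y : Fin d → ℝ) (hθ : θ ∈ lpBall d p) : sqDist (proj y) θ ≤ 4 :=
  calc sqDist (proj y) θ ≤ pNorm p (proj y - θ) ^ 2 :=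
        sum_sq_le_pNorm_sq (by linarith) hp2 (proj y - θ)
    _ ≤ 2 ^ 2 := by gcongr; exacts [pNorm_nonneg _ _, pNorm_sub_le_two hp1 (hproj y).1 hθ]
    _ = 4 := by norm_num

lemma sqDist_lpBall_le {q σ : ℝ} (hproj : IsProjOn (lpBall d p) proj)
    (hpq : p.HolderConjugate q) (hσ : 0 ≤ σ) (hθ : θ ∈ lpBall d p)
    (ξ : Fin d → ℝ) : sqDist (proj (θ + σ • ξ)) θ ≤ 2 * σ * pNorm q ξ := by
  set P := proj (θ + σ • ξ)
  calc sqDist P θ ≤ ∑ i, ((θ + σ • ξ) i - θ i) * (P i - θ i) :=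
        hproj.sqDist_le_sum_mul (convex_lpBall hpq.lt.le) _ hθ
    _ = σ * ∑ i, ξ i * (P - θ) i := by
        simp only [Finset.mul_sum, Pi.add_apply, Pi.smul_apply, Pi.sub_apply, smul_eq_mul]
        exact Finset.sum_congr rfl fun i _ => by ring
    _ ≤ σ * (pNorm q ξ * pNorm p (P - θ)) := by
        gcongr
        exact sum_mul_le_pNorm_mul_pNorm hpq.symm _ _
    _ ≤ σ * (pNorm q ξ * 2) := by
        gcongr
        · exact pNorm_nonneg _ _
        · exact pNorm_sub_le_two hpq.lt.le (hproj _).1 hθ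
    _ = 2 * σ * pNorm q ξ := by ring

lemma risk_lpBall_le_four (hproj : IsProjOn (lpBall d p) proj) (hp1 : 1 ≤ p) (hp2 : p ≤ 2)
    (σ : ℝ) (hθ : θ ∈ lpBall d p) : risk proj σ θ ≤ ENNReal.ofReal 4 :=
  calc risk proj σ θ ≤ ∫⁻ _, ENNReal.ofReal 4 ∂stdGaussian d :=
        lintegral_mono fun _ => ENNReal.ofReal_le_ofReal (hproj.sqDist_lpBall_le_four hp1 hp2 _ hθ)
    _ = ENNReal.ofReal 4 := by simp

lemma risk_lpBall_le {q σ : ℝ} (hproj : IsProjOn (lpBall d p) proj)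
    (hpq : p.HolderConjugate q) (hσ : 0 ≤ σ) (hθ : θ ∈ lpBall d p) :
    risk proj σ θ ≤ ENNReal.ofReal (2 * σ) * ∫⁻ ξ, ENNReal.ofReal (pNorm q ξ) ∂stdGaussian d := by
  rw [← lintegral_const_mul' _ _ ENNReal.ofReal_ne_top]
  refine lintegral_mono fun ξ => ?_
  rw [← ENNReal.ofReal_mul (by positivity)]
  exact ENNReal.ofReal_le_ofReal (hproj.sqDist_lpBall_le hpq hσ hθ ξ)

end IsProjOn

/-- There is a universal constant `C > 0` such that for every `d ≥ 1`,
every `p ∈ (1, 2)` with conjugate `q = p/(p-1)`, and every `σ` with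
`d^{-1/p} ≤ σ ≤ 1/√(1 + log d)`, the worst-case risk of the MLE over the unit ℓp ball
satisfies `R^MLE(B_p^d, σ) ≤ C·min{1, σ·√q·d^{1/q}}`. -/
theorem mle_risk_upper_intermediate_noise :
    ∃ C : ℝ, 0 < C ∧ ∀ d : ℕ, 1 ≤ d → ∀ p q : ℝ, 1 < p → p < 2 → q = p / (p - 1) →
      ∀ σ : ℝ, (d : ℝ) ^ (-(1 / p)) ≤ σ → σ ≤ 1 / Real.sqrt (1 + Real.log d) →
        ∀ proj : (Fin d → ℝ) → Fin d → ℝ, IsProjOn (lpBall d p) proj → Measurable proj →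
          supRisk (lpBall d p) proj σ ≤
            ENNReal.ofReal (C * min 1 (σ * Real.sqrt q * (d : ℝ) ^ (1 / q))) := by
  refine ⟨4, by norm_num, ?_⟩
  intro d _ p q hp1 hp2 hq σ hσ_low _ proj hproj _
  have hpq : p.HolderConjugate q := (Real.holderConjugate_iff_eq_conjExponent hp1).2 hq
  have hσ : 0 ≤ σ := (Real.rpow_nonneg (Nat.cast_nonneg d) _).trans hσ_low
  refine iSup₂_le fun θ hθ => ?_
  rw [mul_min_of_nonneg _ _ (by norm_num), mul_one, ENNReal.ofReal_min]
  refine le_min (hproj.risk_lpBall_le_four hp1.le hp2.le σ hθ) ?_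
  calc risk proj σ θ
      ≤ ENNReal.ofReal (2 * σ) * ∫⁻ ξ, ENNReal.ofReal (pNorm q ξ) ∂stdGaussian d :=
        hproj.risk_lpBall_le hpq hσ hθ
    _ ≤ ENNReal.ofReal (2 * σ) * ENNReal.ofReal (2 * √q * d ^ (1 / q)) := by
        gcongr
        exact lintegral_pNorm_stdGaussian_le hpq.symm.lt.le
    _ = ENNReal.ofReal (4 * (σ * √q * d ^ (1 / q))) := by
        rw [← ENNReal.ofReal_mul (by positivity)]
        ring_nf
end
end
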